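/- If C is a pretriangulated dg (or A∞) category whose homotopy category has a generator set {F_i} with pairwise nonvanishing morphisms (in at least one direction) and Hom⁰(F_i,F_i) = k for all i, and D is a category that is pretriangulated equivalent to a coproduct of two categories each containing a nonzero object, then C and D are not pretriangulated equivalent. -/
import Mathlib


/-!
Statement 15: a category `C` satisfying the indecomposability criterion
(generating set with pairwise nonvanishing morphisms in at least one
direction and scalar degree-0 endomorphisms) is not pretriangulated
equivalent to a decomposable category `D` (one equivalent to a coproduct of
two components, each containing a nonzero object).  Pretriangulated
equivalence is modelled by a (k-linear, triangulated) equivalence of the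
pretriangulated (triangulated) categories.
-/

open CategoryTheory Limits Pretriangulated

lemma zero_of_conj' {D : Type*} [Category D] [Preadditive D] {X Y X' Y' : D}
    (α : X' ≅ X) (β : Y ≅ Y') (f : X ⟶ Y) (h : α.hom ≫ f ≫ β.hom = 0) : f = 0 := by
  have : f = α.inv ≫ (α.hom ≫ f ≫ β.hom) ≫ β.inv := by simp
  rw [this, h]; simp

lemma idem_scalar' {k : Type*} [Field k] {C : Type*} [Category C] [Preadditive C]
    [CategoryTheory.Linear k C]
    {A : C} (φ : (A ⟶ A) ≃ₗ[k] k) (p : A ⟶ A) (hp : p ≫ p = p) : p = 0 ∨ p = 𝟙 A := by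
  have h1 : (𝟙 A : A ⟶ A) ≠ 0 := by
    intro h0
    obtain ⟨x, hx⟩ := φ.surjective 1
    have hx0 : x = 0 := by rw [← Category.comp_id x, h0, comp_zero]
    rw [hx0, map_zero] at hx
    exact one_ne_zero hx.symm
  have hφ1 : φ (𝟙 A) ≠ 0 := by
    intro h
    apply h1
    have := φ.injective (a₁ := 𝟙 A) (a₂ := 0) (by rw [h, map_zero])
    exact this
  set a : k := φ p / φ (𝟙 A) with ha
  have hpa : p = a • 𝟙 A := by
    apply φ.injective
    rw [map_smul, smul_eq_mul, ha, div_mul_cancel₀ _ hφ1]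
  have hsq : (a * a) • (𝟙 A) = a • 𝟙 A := by
    calc (a * a) • (𝟙 A) = (a • 𝟙 A) ≫ (a • 𝟙 A) := by
          rw [Linear.smul_comp, Linear.comp_smul, Category.id_comp, smul_smul]
      _ = p ≫ p := by rw [← hpa]
      _ = p := hp
      _ = a • 𝟙 A := hpa
  have haa : a * a = a := by
    have := congrArg φ hsq
    rw [map_smul, map_smul, smul_eq_mul, smul_eq_mul] at this
    exact mul_right_cancel₀ hφ1 this
  have : a * (a - 1) = 0 := by rw [mul_sub, haa, mul_one, sub_self]
  rcases mul_eq_zero.mp this with h | h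
  · left; rw [hpa, h, zero_smul]
  · right; rw [hpa, sub_eq_zero.mp h, one_smul]

universe v v' u u'

variable (k : Type*) [Field k]

variable (C : Type u) [Category.{v} C] [Preadditive C] [CategoryTheory.Linear k C]
  [HasZeroObject C] [HasShift C ℤ] [∀ n : ℤ, (shiftFunctor C n).Additive]
  [Pretriangulated C] [HasBinaryBiproducts C]

variable (D : Type u') [Category.{v'} D] [Preadditive D] [CategoryTheory.Linear k D]
  [HasZeroObject D] [HasShift D ℤ] [∀ n : ℤ, (shiftFunctor D n).Additive]
  [Pretriangulated D] [HasBinaryBiproducts D]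

/-- `Hom*(A,B) ≠ 0`. -/
def HomStarNeZero {C : Type u} [Category.{v} C] [Preadditive C] [HasShift C ℤ]
    (A B : C) : Prop :=
  ∃ (n : ℤ) (f : A ⟶ B⟦n⟧), f ≠ 0

/-- `{F i}` is a generating set for `C`. -/
def Generates {ι : Type*} (F : ι → C) : Prop :=
  ∀ X : C, (∀ (i : ι) (n : ℤ) (f : F i ⟶ X⟦n⟧), f = 0) → IsZero X

/-- The category is decomposable: it is a coproduct of two orthogonal
components, each containing a nonzero object. -/
def Decomposable : Prop :=
  ∃ P Q : D → Prop,
    (∃ d, P d ∧ ¬ IsZero d) ∧ (∃ e, Q e ∧ ¬ IsZero e) ∧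
    (∀ d e, P d → Q e → ∀ (n : ℤ) (f : d ⟶ e⟦n⟧), f = 0) ∧
    (∀ d e, P d → Q e → ∀ (n : ℤ) (f : e ⟶ d⟦n⟧), f = 0) ∧
    (∀ X : D, ∃ d e, P d ∧ Q e ∧ Nonempty (X ≅ d ⊞ e))

/-- `C` (indecomposable by the criterion) and `D`
(decomposable) are not pretriangulated equivalent: there is no k-linear
triangulated equivalence between them. -/
theorem stmt_15 {ι : Type*} (F : ι → C)
    (hgen : Generates C F)
    (hconn : ∀ i j : ι, HomStarNeZero (F i) (F j) ∨ HomStarNeZero (F j) (F i))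
    (hend : ∀ ℓ : ι, Nonempty ((F ℓ ⟶ F ℓ) ≃ₗ[k] k))
    (hdec : Decomposable D)
    (e : C ≌ D) [e.functor.Additive] [e.functor.Linear k]
    [e.functor.CommShift ℤ] [e.functor.IsTriangulated] : False := by
  classical
  obtain ⟨P, Q, ⟨d0, hPd0, hd0ne⟩, ⟨y0, hQy0, hy0ne⟩, h3, h4, hsplit⟩ := hdec
  -- Every generator is sent (up to iso) into one of the two components.
  have side : ∀ ℓ : ι, (∃ d, P d ∧ Nonempty (e.functor.obj (F ℓ) ≅ d)) ∨
      (∃ y, Q y ∧ Nonempty (e.functor.obj (F ℓ) ≅ y)) := by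
    intro ℓ
    obtain ⟨d, y, hPd, hQy, ⟨ψ⟩⟩ := hsplit (e.functor.obj (F ℓ))
    set p' : e.functor.obj (F ℓ) ⟶ e.functor.obj (F ℓ) :=
      ψ.hom ≫ biprod.fst ≫ biprod.inl ≫ ψ.inv with hp'
    have hidem : p' ≫ p' = p' := by simp [hp']
    set p : F ℓ ⟶ F ℓ := e.functor.preimage p' with hpdef
    have hmap : e.functor.map p = p' := e.functor.map_preimage p'
    have hpp : p ≫ p = p := by
      apply e.functor.map_injective
      rw [Functor.map_comp, hmap, hidem]
    rcases idem_scalar' (hend ℓ).some p hpp with h0 | h1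
    · -- p = 0 : the P-component vanishes
      have hp'0 : p' = 0 := by rw [← hmap, h0, Functor.map_zero]
      have hfi : (biprod.fst ≫ biprod.inl : d ⊞ y ⟶ d ⊞ y) = 0 := by
        have : ψ.inv ≫ p' ≫ ψ.hom = biprod.fst ≫ biprod.inl := by simp [hp']
        rw [← this, hp'0, zero_comp, comp_zero]
      have hsnd : (biprod.snd ≫ biprod.inr : d ⊞ y ⟶ d ⊞ y) = 𝟙 (d ⊞ y) := by
        have := biprod.total (X := d) (Y := y)
        rw [hfi, zero_add] at this
        exact this
      refine Or.inr ⟨y, hQy, ⟨ψ ≪≫ ⟨biprod.snd, biprod.inr, hsnd, biprod.inr_snd⟩⟩⟩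
    · -- p = 𝟙 : the Q-component vanishes
      have hp'1 : p' = 𝟙 _ := by rw [← hmap, h1]; exact e.functor.map_id _
      have hfi : (biprod.fst ≫ biprod.inl : d ⊞ y ⟶ d ⊞ y) = 𝟙 (d ⊞ y) := by
        have : ψ.inv ≫ p' ≫ ψ.hom = biprod.fst ≫ biprod.inl := by simp [hp']
        rw [← this, hp'1]; simp
      exact Or.inl ⟨d, hPd, ⟨ψ ≪≫ ⟨biprod.fst, biprod.inl, hfi, biprod.inl_fst⟩⟩⟩
  -- Generators cannot live in both components.
  have nomix : ∀ (i j : ι) (d y : D), P d → Q y →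
      (e.functor.obj (F i) ≅ d) → (e.functor.obj (F j) ≅ y) → False := by
    intro i j d y hPd hQy ψd ψy
    rcases hconn i j with ⟨n, f, hf⟩ | ⟨n, f, hf⟩
    · apply hf
      apply e.functor.map_injective
      rw [Functor.map_zero]
      refine zero_of_conj' ψd.symm
        ((e.functor.commShiftIso n).app (F j) ≪≫ (shiftFunctor D n).mapIso ψy)
        (e.functor.map f) ?_
      exact h3 d y hPd hQy n _
    · apply hf
      apply e.functor.map_injective
      rw [Functor.map_zero]
      refine zero_of_conj' ψy.symm
        ((e.functor.commShiftIso n).app (F i) ≪≫ (shiftFunctor D n).mapIso ψd)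
        (e.functor.map f) ?_
      exact h4 d y hPd hQy n _
  -- A nonzero object of one component cannot be hit: contradiction via generation.
  have key : ∀ (z : D), ¬ IsZero z →
      (∀ (i : ι) (n : ℤ) (g : e.functor.obj (F i) ⟶ z⟦n⟧), g = 0) → False := by
    intro z hzne hz
    have hX : IsZero (e.inverse.obj z) := by
      apply hgen
      intro i n f
      apply e.functor.map_injective
      rw [Functor.map_zero]
      refine zero_of_conj' (Iso.refl _)
        ((e.functor.commShiftIso n).app (e.inverse.obj z) ≪≫
          (shiftFunctor D n).mapIso (e.counitIso.app z)) (e.functor.map f) ?_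
      rw [Iso.refl_hom, Category.id_comp]
      exact hz i n _
    apply hzne
    have hEX : IsZero (e.functor.obj (e.inverse.obj z)) := by
      rw [IsZero.iff_id_eq_zero] at hX ⊢
      rw [← e.functor.map_id, hX, Functor.map_zero]
    exact hEX.of_iso (e.counitIso.app z).symm
  by_cases hq : ∃ (j : ι) (y : D), Q y ∧ Nonempty (e.functor.obj (F j) ≅ y)
  · -- all generators on the Q side; the P side object d0 is unreachable
    obtain ⟨j, y, hQy, ⟨ψy⟩⟩ := hq
    apply key d0 hd0ne
    intro i n g
    rcases side i with ⟨d, hPd, ⟨ψd⟩⟩ | ⟨y', hQy', ⟨ψy'⟩⟩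
    · exact (nomix i j d y hPd hQy ψd ψy).elim
    · refine zero_of_conj' ψy'.symm (Iso.refl _) g ?_
      rw [Iso.refl_hom, Category.comp_id]
      exact h4 d0 y' hPd0 hQy' n _
  · -- all generators on the P side; the Q side object y0 is unreachable
    apply key y0 hy0ne
    intro i n g
    rcases side i with ⟨d, hPd, ⟨ψd⟩⟩ | ⟨y', hQy', ⟨ψy'⟩⟩
    · refine zero_of_conj' ψd.symm (Iso.refl _) g ?_
      rw [Iso.refl_hom, Category.comp_id]
      exact h3 d y0 hPd hQy0 n _
    · exact (hq ⟨i, y', hQy', ⟨ψy'⟩⟩).elim
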